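/- Let A be an n×n real matrix such that all complex eigenvalues of A have nonzero imaginary part (A has no real eigenvalues). Then Id - t·A is invertible for every real t, and the solution X(t) = A·(Id - t·A)⁻¹ of X' = X·X is defined for all real t (an eternal solution). -/

import Mathlib

/-!
For real `t ≠ 0`, `1 - t • A` is singular exactly when `t⁻¹` is a real eigenvalue of `A`, and a
real eigenvalue of `A` is an eigenvalue of its complexification since both have the same
characteristic polynomial. Wherever `1 - s • A` is invertible, the derivative of the inverse gives
`d/ds (1 - s • A)⁻¹ = (1 - s • A)⁻¹ * A * (1 - s • A)⁻¹`, hence `X' = X * X`.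
-/

open Matrix

attribute [local instance] Matrix.linftyOpNormedRing Matrix.linftyOpNormedAlgebra

theorem Matrix.apply_mem_spectrum_map_iff {n K L : Type*} [Fintype n] [DecidableEq n] [Field K]
    [Field L] (f : K →+* L) (A : Matrix n n K) (r : K) :
    f r ∈ spectrum L (A.map f) ↔ r ∈ spectrum K A := by
  rw [mem_spectrum_iff_isRoot_charpoly, mem_spectrum_iff_isRoot_charpoly, charpoly_map,
    Polynomial.IsRoot, Polynomial.eval_map, Polynomial.eval₂_at_apply,
    map_eq_zero_iff f f.injective, Polynomial.IsRoot]

theorem Matrix.spectrum_eq_empty_of_forall_im_ne_zero {n : Type*} [Fintype n] [DecidableEq n]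
    (A : Matrix n n ℝ) (h : ∀ mu ∈ spectrum ℂ (A.map Complex.ofReal), mu.im ≠ 0) :
    spectrum ℝ A = ∅ :=
  Set.eq_empty_of_forall_notMem fun r hr =>
    h r ((A.apply_mem_spectrum_map_iff Complex.ofRealHom r).2 hr) (Complex.ofReal_im r)

theorem spectrum.isUnit_one_sub_smul_iff {K A : Type*} [Field K] [Ring A] [Algebra K A] {a : A}
    {t : K} (ht : t ≠ 0) : IsUnit (1 - t • a) ↔ t⁻¹ ∉ spectrum K a := by
  rw [spectrum.notMem_iff, Algebra.algebraMap_eq_smul_one]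
  simpa [Units.smul_def] using (IsUnit.smul_sub_iff_sub_inv_smul (Units.mk0 t ht)⁻¹ a).symm

section OneSubSMulInverse

variable {𝕜 R : Type*} [NontriviallyNormedField 𝕜] [NormedRing R] [HasSummableGeomSeries R]
  [NormedAlgebra 𝕜 R]

theorem hasDerivAt_ringInverse_one_sub_smul (a : R) {t : 𝕜} (ht : IsUnit (1 - t • a)) :
    HasDerivAt (fun s : 𝕜 => Ring.inverse (1 - s • a))
      (Ring.inverse (1 - t • a) * a * Ring.inverse (1 - t • a)) t := by
  have hlin : HasDerivAt (fun s : 𝕜 => 1 - s • a) (-a) t := by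
    simpa using ((hasDerivAt_id t).smul_const a).const_sub 1
  refine ((hasFDerivAt_ringInverse (𝕜 := 𝕜) ht.unit).comp_hasDerivAt t hlin).congr_deriv ?_
  change -(↑ht.unit⁻¹ * -a * ↑ht.unit⁻¹) = _
  rw [← Ring.inverse_unit, ht.unit_spec, mul_neg, neg_mul, neg_neg]

theorem hasDerivAt_mul_ringInverse_one_sub_smul (a : R) {t : 𝕜} (ht : IsUnit (1 - t • a)) :
    HasDerivAt (fun s : 𝕜 => a * Ring.inverse (1 - s • a))
      (a * Ring.inverse (1 - t • a) * (a * Ring.inverse (1 - t • a))) t := by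
  simpa only [mul_assoc] using (hasDerivAt_ringInverse_one_sub_smul a ht).const_mul a

end OneSubSMulInverse

/-- If all complex eigenvalues of the real matrix `A` have nonzero imaginary part, then
`Id - t • A` is invertible for all real `t` and `X(t) = A (Id - tA)⁻¹` is an eternal
solution of `X' = X X`. -/
theorem eternal_of_no_real_eigenvalue {n : ℕ} (A : Matrix (Fin n) (Fin n) ℝ)
    (h : ∀ mu ∈ spectrum ℂ (A.map (Complex.ofReal)), mu.im ≠ 0) :
    (∀ t : ℝ, IsUnit (1 - t • A)) ∧
      ∀ t : ℝ, HasDerivAt (fun s : ℝ => A * (1 - s • A)⁻¹)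
        ((A * (1 - t • A)⁻¹) * (A * (1 - t • A)⁻¹)) t := by
  have hunit : ∀ t : ℝ, IsUnit (1 - t • A) := by
    intro t
    rcases eq_or_ne t 0 with rfl | ht
    · simp
    rw [spectrum.isUnit_one_sub_smul_iff ht, A.spectrum_eq_empty_of_forall_im_ne_zero h]
    exact Set.notMem_empty _
  refine ⟨hunit, fun t => ?_⟩
  simp only [nonsing_inv_eq_ringInverse]
  exact hasDerivAt_mul_ringInverse_one_sub_smul A (hunit t)
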